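/- The metric space (C_tem, ϱ) is Polish, i.e., it is a complete and separable metric space. -/

import Mathlib

open MeasureTheory Real

/-- The weighted sup distance `ϱ_λ(f,g) = sup_x |f(x)-g(x)| e^{-λ|x|}`. -/
noncomputable def rhoLam (lam : ℝ) (f g : ℝ → ℝ) : ℝ :=
  ⨆ x : ℝ, |f x - g x| * Real.exp (-lam * |x|)

/-- The space `C_tem` of continuous functions with all weighted sup norms finite. -/
def Ctem : Set (ℝ → ℝ) :=
  {f | Continuous f ∧ ∀ lam > (0 : ℝ), ∃ M : ℝ, ∀ x : ℝ, |f x| * Real.exp (-lam * |x|) ≤ M}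

/-- The metric `ϱ(f,g) = ∑_{n≥1} 2^{-n} min(1, ϱ_{1/n}(f,g))` on `C_tem`. -/
noncomputable def rhoC (f g : ℝ → ℝ) : ℝ :=
  ∑' n : ℕ, (1 / 2 : ℝ) ^ (n + 1) * min 1 (rhoLam (((n : ℝ) + 1)⁻¹) f g)

namespace CtemAux

lemma bdd {f g : ℝ → ℝ} (hf : f ∈ Ctem) (hg : g ∈ Ctem) {lam : ℝ} (hlam : 0 < lam) :
    BddAbove (Set.range fun x => |f x - g x| * Real.exp (-lam * |x|)) := by
  obtain ⟨Mf, hMf⟩ := hf.2 lam hlam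
  obtain ⟨Mg, hMg⟩ := hg.2 lam hlam
  refine ⟨Mf + Mg, ?_⟩
  rintro _ ⟨x, rfl⟩
  have h1 : |f x - g x| ≤ |f x| + |g x| := abs_sub _ _
  calc |f x - g x| * Real.exp (-lam * |x|)
      ≤ (|f x| + |g x|) * Real.exp (-lam * |x|) := by
        gcongr
    _ = |f x| * Real.exp (-lam * |x|) + |g x| * Real.exp (-lam * |x|) := by ring
    _ ≤ Mf + Mg := add_le_add (hMf x) (hMg x)

lemma rhoLam_nonneg (lam : ℝ) (f g : ℝ → ℝ) : 0 ≤ rhoLam lam f g := by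
  by_cases h : BddAbove (Set.range fun x => |f x - g x| * Real.exp (-lam * |x|))
  · exact le_trans (by positivity) (le_ciSup h 0)
  · unfold rhoLam
    rw [Real.iSup_of_not_bddAbove h]

lemma le_rhoLam {f g : ℝ → ℝ} {lam : ℝ}
    (h : BddAbove (Set.range fun x => |f x - g x| * Real.exp (-lam * |x|))) (x : ℝ) :
    |f x - g x| * Real.exp (-lam * |x|) ≤ rhoLam lam f g :=
  le_ciSup h x

lemma rhoLam_le {f g : ℝ → ℝ} {lam c : ℝ}
    (h : ∀ x, |f x - g x| * Real.exp (-lam * |x|) ≤ c) : rhoLam lam f g ≤ c :=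
  ciSup_le h

lemma rhoLam_self (lam : ℝ) (f : ℝ → ℝ) : rhoLam lam f f = 0 := by
  unfold rhoLam
  simp only [sub_self, abs_zero, zero_mul]
  exact ciSup_const

lemma rhoLam_comm (lam : ℝ) (f g : ℝ → ℝ) : rhoLam lam f g = rhoLam lam g f := by
  unfold rhoLam
  simp_rw [abs_sub_comm]

lemma rhoLam_triangle {f g h : ℝ → ℝ} (hf : f ∈ Ctem) (hg : g ∈ Ctem) (hh : h ∈ Ctem)
    {lam : ℝ} (hlam : 0 < lam) :
    rhoLam lam f h ≤ rhoLam lam f g + rhoLam lam g h := by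
  apply rhoLam_le
  intro x
  calc |f x - h x| * Real.exp (-lam * |x|)
      ≤ (|f x - g x| + |g x - h x|) * Real.exp (-lam * |x|) := by
        gcongr
        exact abs_sub_le _ _ _
    _ = |f x - g x| * Real.exp (-lam * |x|) + |g x - h x| * Real.exp (-lam * |x|) := by ring
    _ ≤ rhoLam lam f g + rhoLam lam g h :=
        add_le_add (le_rhoLam (bdd hf hg hlam) x) (le_rhoLam (bdd hg hh hlam) x)

lemma term_nonneg (f g : ℝ → ℝ) (n : ℕ) :
    0 ≤ (1 / 2 : ℝ) ^ (n + 1) * min 1 (rhoLam (((n : ℝ) + 1)⁻¹) f g) :=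
  mul_nonneg (by positivity) (le_min zero_le_one (rhoLam_nonneg _ _ _))

lemma term_le (f g : ℝ → ℝ) (n : ℕ) :
    (1 / 2 : ℝ) ^ (n + 1) * min 1 (rhoLam (((n : ℝ) + 1)⁻¹) f g) ≤ (1 / 2 : ℝ) ^ (n + 1) :=
  mul_le_of_le_one_right (by positivity) (min_le_left _ _)

lemma summable_half : Summable (fun n : ℕ => (1 / 2 : ℝ) ^ (n + 1)) := by
  simpa [pow_succ, mul_comm] using summable_geometric_two.mul_left (1 / 2 : ℝ)

lemma tsum_half : (∑' n : ℕ, (1 / 2 : ℝ) ^ (n + 1)) = 1 := by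
  simp_rw [pow_succ, mul_comm]
  rw [tsum_mul_left, tsum_geometric_two]
  norm_num

lemma summable_term (f g : ℝ → ℝ) :
    Summable (fun n : ℕ => (1 / 2 : ℝ) ^ (n + 1) * min 1 (rhoLam (((n : ℝ) + 1)⁻¹) f g)) :=
  Summable.of_nonneg_of_le (term_nonneg f g) (term_le f g) summable_half

lemma rhoC_nonneg (f g : ℝ → ℝ) : 0 ≤ rhoC f g :=
  tsum_nonneg (term_nonneg f g)

lemma rhoC_self (f : ℝ → ℝ) : rhoC f f = 0 := by
  unfold rhoC
  simp [rhoLam_self]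

lemma rhoC_comm (f g : ℝ → ℝ) : rhoC f g = rhoC g f := by
  unfold rhoC
  exact tsum_congr fun n => by rw [rhoLam_comm]

lemma min1_add {a b : ℝ} (ha : 0 ≤ a) (hb : 0 ≤ b) :
    min 1 (a + b) ≤ min 1 a + min 1 b := by
  rcases le_total 1 a with h | h
  · calc min 1 (a + b) ≤ 1 := min_le_left _ _
      _ = min 1 a + 0 := by rw [min_eq_left h]; ring
      _ ≤ min 1 a + min 1 b := by gcongr; exact le_min zero_le_one hb
  · rcases le_total 1 b with h' | h'
    · calc min 1 (a + b) ≤ 1 := min_le_left _ _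
        _ = 0 + min 1 b := by rw [min_eq_left h']; ring
        _ ≤ min 1 a + min 1 b := by gcongr; exact le_min zero_le_one ha
    · calc min 1 (a + b) ≤ a + b := min_le_right _ _
        _ = min 1 a + min 1 b := by rw [min_eq_right h, min_eq_right h']

lemma rhoC_triangle {f g h : ℝ → ℝ} (hf : f ∈ Ctem) (hg : g ∈ Ctem) (hh : h ∈ Ctem) :
    rhoC f h ≤ rhoC f g + rhoC g h := by
  unfold rhoC
  rw [← Summable.tsum_add (summable_term f g) (summable_term g h)]
  refine Summable.tsum_le_tsum (fun n => ?_) (summable_term f h)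
    ((summable_term f g).add (summable_term g h))
  have hpos : (0:ℝ) < ((n : ℝ) + 1)⁻¹ := by positivity
  calc (1 / 2 : ℝ) ^ (n + 1) * min 1 (rhoLam (((n : ℝ) + 1)⁻¹) f h)
      ≤ (1 / 2 : ℝ) ^ (n + 1) *
        (min 1 (rhoLam (((n : ℝ) + 1)⁻¹) f g) + min 1 (rhoLam (((n : ℝ) + 1)⁻¹) g h)) := by
        refine mul_le_mul_of_nonneg_left ?_ (by positivity)
        refine le_trans (min_le_min le_rfl (rhoLam_triangle hf hg hh hpos)) ?_
        exact min1_add (rhoLam_nonneg _ _ _) (rhoLam_nonneg _ _ _)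
    _ = _ := by ring

lemma rhoC_eq_zero {f g : ℝ → ℝ} (hf : f ∈ Ctem) (hg : g ∈ Ctem) (h : rhoC f g = 0) :
    f = g := by
  have h0 : (1 / 2 : ℝ) ^ (0 + 1) * min 1 (rhoLam (((0 : ℕ) : ℝ) + 1)⁻¹ f g) ≤ 0 := by
    rw [← h]
    exact Summable.le_tsum (summable_term f g) 0 fun j _ => term_nonneg f g j
  have h1 : min 1 (rhoLam (((0 : ℕ) : ℝ) + 1)⁻¹ f g) = 0 := by
    have := term_nonneg f g 0
    nlinarith [le_antisymm h0 this]
  have hr0 : rhoLam (((0 : ℕ) : ℝ) + 1)⁻¹ f g = 0 := by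
    rcases min_cases 1 (rhoLam (((0 : ℕ) : ℝ) + 1)⁻¹ f g) with ⟨he, _⟩ | ⟨he, _⟩
    · rw [he] at h1; norm_num at h1
    · rw [he] at h1; exact h1
  funext x
  have hb := le_rhoLam (f := f) (g := g) (bdd hf hg (by positivity : (0:ℝ) < (((0 : ℕ) : ℝ) + 1)⁻¹)) x
  rw [hr0] at hb
  have hexp : 0 < Real.exp (-(((0 : ℕ) : ℝ) + 1)⁻¹ * |x|) := Real.exp_pos _
  have : |f x - g x| ≤ 0 := by nlinarith [abs_nonneg (f x - g x)]
  have := abs_nonpos_iff.mp this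
  linarith [sub_eq_zero.mp this, this]

end CtemAux
namespace CtemAux

/-- Type synonym to carry the bespoke metric (avoiding the product uniformity
inherited by the subtype). -/
def CtemT : Type := {f : ℝ → ℝ // f ∈ Ctem}

noncomputable instance ctemMS : MetricSpace CtemT where
  dist f g := rhoC f.1 g.1
  dist_self f := rhoC_self f.1
  dist_comm f g := rhoC_comm f.1 g.1
  dist_triangle f g h := rhoC_triangle f.2 g.2 h.2
  eq_of_dist_eq_zero {f g} h := Subtype.ext (rhoC_eq_zero f.2 g.2 h)

lemma dist_def (f g : CtemT) : dist f g = rhoC f.1 g.1 := rfl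

lemma term_le_dist (f g : CtemT) (n : ℕ) :
    (1 / 2 : ℝ) ^ (n + 1) * min 1 (rhoLam (((n : ℝ) + 1)⁻¹) f.1 g.1) ≤ dist f g :=
  Summable.le_tsum (summable_term f.1 g.1) n fun j _ => term_nonneg f.1 g.1 j

lemma rhoLam_lt_of_dist {f g : CtemT} {n : ℕ} {ε : ℝ} (_hε : 0 < ε)
    (h : dist f g < (1 / 2 : ℝ) ^ (n + 1) * min 1 ε) :
    rhoLam (((n : ℝ) + 1)⁻¹) f.1 g.1 < ε := by
  have h1 : min 1 (rhoLam (((n : ℝ) + 1)⁻¹) f.1 g.1) < min 1 ε := by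
    have := lt_of_le_of_lt (term_le_dist f g n) h
    have hp : (0:ℝ) < (1 / 2 : ℝ) ^ (n + 1) := by positivity
    exact lt_of_mul_lt_mul_left (by linarith [this]) hp.le
  rcases min_cases 1 (rhoLam (((n : ℝ) + 1)⁻¹) f.1 g.1) with ⟨he, _⟩ | ⟨he, hle⟩
  · rw [he] at h1
    exact absurd (min_le_left 1 ε) (not_le.mpr h1)
  · rw [he] at h1
    exact lt_of_lt_of_le h1 (min_le_right _ _)

/-- Bounding `rhoC` by control of finitely many `rhoLam`'s. -/
lemma rhoC_le_of {f g : ℝ → ℝ} {ε : ℝ} (hε : 0 ≤ ε) (N : ℕ)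
    (h : ∀ n < N, rhoLam (((n : ℝ) + 1)⁻¹) f g ≤ ε) :
    rhoC f g ≤ ε + (1 / 2 : ℝ) ^ N := by
  unfold rhoC
  rw [← Summable.sum_add_tsum_nat_add N (summable_term f g)]
  have hfront : (∑ n ∈ Finset.range N,
      (1 / 2 : ℝ) ^ (n + 1) * min 1 (rhoLam (((n : ℝ) + 1)⁻¹) f g)) ≤ ε := by
    calc (∑ n ∈ Finset.range N, (1 / 2 : ℝ) ^ (n + 1) * min 1 (rhoLam (((n : ℝ) + 1)⁻¹) f g))
        ≤ ∑ n ∈ Finset.range N, (1 / 2 : ℝ) ^ (n + 1) * ε := by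
          refine Finset.sum_le_sum fun n hn => ?_
          refine mul_le_mul_of_nonneg_left ?_ (by positivity)
          exact le_trans (min_le_right _ _) (h n (Finset.mem_range.mp hn))
      _ = (∑ n ∈ Finset.range N, (1 / 2 : ℝ) ^ (n + 1)) * ε := by
          rw [Finset.sum_mul]
      _ ≤ 1 * ε := by
          refine mul_le_mul_of_nonneg_right ?_ hε
          exact le_trans (Summable.sum_le_tsum _ (fun n _ => by positivity) summable_half)
            (le_of_eq tsum_half)
      _ = ε := one_mul ε
  have htail : (∑' n : ℕ, (1 / 2 : ℝ) ^ (n + N + 1) *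
      min 1 (rhoLam ((((n + N : ℕ) : ℝ) + 1)⁻¹) f g)) ≤ (1 / 2 : ℝ) ^ N := by
    have hs2 : Summable (fun n : ℕ => (1 / 2 : ℝ) ^ N * (1 / 2 : ℝ) ^ (n + 1)) :=
      summable_half.mul_left _
    calc (∑' n : ℕ, (1 / 2 : ℝ) ^ (n + N + 1) * min 1 (rhoLam ((((n + N : ℕ) : ℝ) + 1)⁻¹) f g))
        ≤ ∑' n : ℕ, (1 / 2 : ℝ) ^ N * (1 / 2 : ℝ) ^ (n + 1) := by
          refine Summable.tsum_le_tsum (fun n => ?_)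
            ((summable_nat_add_iff N).mpr (summable_term f g)) hs2
          have := term_le f g (n + N)
          calc (1 / 2 : ℝ) ^ (n + N + 1) * min 1 (rhoLam ((((n + N : ℕ) : ℝ) + 1)⁻¹) f g)
              ≤ (1 / 2 : ℝ) ^ (n + N + 1) := by
                push_cast at this ⊢
                convert this using 3
            _ = (1 / 2 : ℝ) ^ N * (1 / 2 : ℝ) ^ (n + 1) := by ring
      _ = (1 / 2 : ℝ) ^ N * 1 := by rw [tsum_mul_left, tsum_half]
      _ = (1 / 2 : ℝ) ^ N := mul_one _
  calc (∑ n ∈ Finset.range N, (1 / 2 : ℝ) ^ (n + 1) * min 1 (rhoLam (((n : ℝ) + 1)⁻¹) f g))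
        + (∑' n : ℕ, (1 / 2 : ℝ) ^ (n + N + 1) *
            min 1 (rhoLam ((((n + N : ℕ) : ℝ) + 1)⁻¹) f g)) ≤ ε + (1 / 2 : ℝ) ^ N :=
      add_le_add hfront htail

end CtemAux
namespace CtemAux

lemma abs_le_of_weighted {a c lam x : ℝ} (h : a * Real.exp (-lam * x) ≤ c) :
    a ≤ c * Real.exp (lam * x) := by
  have hmul : Real.exp (-lam * x) * Real.exp (lam * x) = 1 := by
    have h0 : -lam * x + lam * x = 0 := by ring
    rw [← Real.exp_add, h0, Real.exp_zero]
  calc a = a * (Real.exp (-lam * x) * Real.exp (lam * x)) := by rw [hmul, mul_one]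
    _ = a * Real.exp (-lam * x) * Real.exp (lam * x) := by rw [mul_assoc]
    _ ≤ c * Real.exp (lam * x) :=
        mul_le_mul_of_nonneg_right h (Real.exp_pos _).le

instance ctemComplete : CompleteSpace CtemT := by
  refine Metric.complete_of_cauchySeq_tendsto fun u hu => ?_
  have hposl : ∀ n : ℕ, (0:ℝ) < ((n : ℝ) + 1)⁻¹ := fun n => by positivity
  have key : ∀ (n : ℕ) (ε : ℝ), 0 < ε → ∃ N, ∀ k ≥ N, ∀ m ≥ N,
      rhoLam (((n : ℝ) + 1)⁻¹) (u k).1 (u m).1 ≤ ε := by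
    intro n ε hε
    obtain ⟨N, hN⟩ := Metric.cauchySeq_iff.mp hu _
      (mul_pos (by positivity : (0:ℝ) < (1/2:ℝ)^(n+1)) (lt_min one_pos hε))
    exact ⟨N, fun k hk m hm => (rhoLam_lt_of_dist hε (hN k hk m hm)).le⟩
  have hpt : ∀ x : ℝ, ∃ l : ℝ, Filter.Tendsto (fun k => (u k).1 x) Filter.atTop (nhds l) := by
    intro x
    apply cauchySeq_tendsto_of_complete
    rw [Metric.cauchySeq_iff]
    intro ε hε
    set w : ℝ := Real.exp ((((0:ℕ) : ℝ) + 1)⁻¹ * |x|) with hw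
    have hwpos : 0 < w := Real.exp_pos _
    obtain ⟨N, hN⟩ := key 0 (ε / (2 * w)) (by positivity)
    refine ⟨N, fun k hk m hm => ?_⟩
    have h1 : |(u k).1 x - (u m).1 x| * Real.exp (-(((0:ℕ) : ℝ) + 1)⁻¹ * |x|)
        ≤ ε / (2 * w) :=
      le_trans (le_rhoLam (bdd (u k).2 (u m).2 (hposl 0)) x) (hN k hk m hm)
    have h2 := abs_le_of_weighted h1
    rw [← hw] at h2
    rw [Real.dist_eq]
    have : ε / (2 * w) * w = ε / 2 := by field_simp
    rw [this] at h2
    linarith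
  choose F hF using hpt
  have A : ∀ (n : ℕ) (ε : ℝ), 0 < ε → ∃ N, ∀ k ≥ N, ∀ x : ℝ,
      |(u k).1 x - F x| * Real.exp (-((n : ℝ) + 1)⁻¹ * |x|) ≤ ε := by
    intro n ε hε
    obtain ⟨N, hN⟩ := key n ε hε
    refine ⟨N, fun k hk x => ?_⟩
    have htend : Filter.Tendsto
        (fun m => |(u k).1 x - (u m).1 x| * Real.exp (-((n : ℝ) + 1)⁻¹ * |x|))
        Filter.atTop (nhds (|(u k).1 x - F x| * Real.exp (-((n : ℝ) + 1)⁻¹ * |x|))) :=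
      (((hF x).const_sub _).abs).mul_const _
    refine le_of_tendsto htend ?_
    filter_upwards [Filter.eventually_ge_atTop N] with m hm
    exact le_trans (le_rhoLam (bdd (u k).2 (u m).2 (hposl n)) x) (hN k hk m hm)
  have hFc : Continuous F := by
    rw [continuous_iff_continuousAt]
    intro x₀
    set R : ℝ := |x₀| + 1 with hR
    have hball : TendstoUniformlyOn (fun k x => (u k).1 x) F Filter.atTop
        (Metric.ball 0 R) := by
      rw [Metric.tendstoUniformlyOn_iff]
      intro ε hε
      set w : ℝ := Real.exp ((((0:ℕ) : ℝ) + 1)⁻¹ * R) with hw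
      have hwpos : 0 < w := Real.exp_pos _
      obtain ⟨N, hN⟩ := A 0 (ε / (2 * w)) (by positivity)
      filter_upwards [Filter.eventually_ge_atTop N] with k hk
      intro x hx
      have hxR : |x| < R := by
        have := Metric.mem_ball.mp hx
        rwa [Real.dist_eq, sub_zero] at this
      have h2 := abs_le_of_weighted (hN k hk x)
      have hexp : Real.exp ((((0:ℕ) : ℝ) + 1)⁻¹ * |x|) ≤ w := by
        rw [hw]
        apply Real.exp_le_exp.mpr
        have h0 := hposl 0
        nlinarith [abs_nonneg x]
      have h3 : |(u k).1 x - F x| ≤ ε / 2 := by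
        calc |(u k).1 x - F x| ≤ ε / (2 * w) * Real.exp ((((0:ℕ) : ℝ) + 1)⁻¹ * |x|) := h2
          _ ≤ ε / (2 * w) * w := by gcongr
          _ = ε / 2 := by field_simp
      rw [Real.dist_eq, abs_sub_comm]
      linarith
    have hcont : ContinuousOn F (Metric.ball 0 R) :=
      hball.continuousOn (Filter.Eventually.of_forall fun k => ((u k).2.1).continuousOn).frequently
    refine hcont.continuousAt (Metric.isOpen_ball.mem_nhds ?_)
    rw [Metric.mem_ball, Real.dist_eq, sub_zero, hR]
    exact lt_add_one _
  have hFmem : F ∈ Ctem := by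
    refine ⟨hFc, fun lam hlam => ?_⟩
    obtain ⟨n, hn⟩ := exists_nat_gt (1 / lam)
    have hpos : (0:ℝ) < (n : ℝ) + 1 := by positivity
    have hln : ((n : ℝ) + 1)⁻¹ ≤ lam := by
      rw [inv_le_comm₀ hpos hlam, ← one_div]
      linarith
    obtain ⟨N, hN⟩ := A n 1 one_pos
    obtain ⟨M, hM⟩ := (u N).2.2 lam hlam
    refine ⟨M + 1, fun x => ?_⟩
    have h1 := hN N le_rfl x
    have hexp : Real.exp (-lam * |x|) ≤ Real.exp (-((n:ℝ)+1)⁻¹ * |x|) := by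
      apply Real.exp_le_exp.mpr
      nlinarith [abs_nonneg x]
    have habs : |F x| ≤ |(u N).1 x| + |(u N).1 x - F x| := by
      have hidF : F x = (u N).1 x - ((u N).1 x - F x) := by ring
      calc |F x| = |(u N).1 x - ((u N).1 x - F x)| := by rw [← hidF]
        _ ≤ |(u N).1 x| + |(u N).1 x - F x| := abs_sub _ _
    calc |F x| * Real.exp (-lam * |x|)
        ≤ (|(u N).1 x| + |(u N).1 x - F x|) * Real.exp (-lam * |x|) := by gcongr
      _ = |(u N).1 x| * Real.exp (-lam * |x|)
          + |(u N).1 x - F x| * Real.exp (-lam * |x|) := by ring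
      _ ≤ M + 1 := by
          refine add_le_add (hM x) ?_
          calc |(u N).1 x - F x| * Real.exp (-lam * |x|)
              ≤ |(u N).1 x - F x| * Real.exp (-((n:ℝ)+1)⁻¹ * |x|) := by
                exact mul_le_mul_of_nonneg_left hexp (abs_nonneg _)
            _ ≤ 1 := h1
  refine ⟨⟨F, hFmem⟩, ?_⟩
  refine Metric.tendsto_atTop.mpr ?_
  intro ε hε
  obtain ⟨K, hK⟩ := exists_pow_lt_of_lt_one (half_pos hε) (by norm_num : (1/2:ℝ) < 1)
  have A4 := fun n : ℕ => A n (ε/4) (by positivity)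
  choose Nf hNf using A4
  refine ⟨(Finset.range K).sup Nf, fun k hk => ?_⟩
  have hrho : ∀ n < K, rhoLam (((n:ℝ)+1)⁻¹) (u k).1 F ≤ ε/4 := by
    intro n hn
    apply rhoLam_le
    intro x
    exact hNf n k (le_trans (Finset.le_sup (Finset.mem_range.mpr hn)) hk) x
  have hle := rhoC_le_of (by positivity : (0:ℝ) ≤ ε/4) K hrho
  show rhoC (u k).1 F < ε
  calc rhoC (u k).1 F ≤ ε/4 + (1/2:ℝ)^K := hle
    _ < ε/4 + ε/2 := by linarith
    _ < ε := by linarith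

end CtemAux
namespace CtemAux

/-- Piecewise-linear cutoff, equal to `1` on `[-R, R]` and `0` outside `[-(R+1), R+1]`. -/
def cut (R : ℕ) (x : ℝ) : ℝ := min 1 (max 0 ((R : ℝ) + 1 - |x|))

lemma cut_continuous (R : ℕ) : Continuous (cut R) := by
  unfold cut
  exact continuous_const.min (continuous_const.max (continuous_const.sub continuous_abs))

lemma cut_nonneg (R : ℕ) (x : ℝ) : 0 ≤ cut R x := le_min zero_le_one (le_max_left _ _)

lemma cut_le_one (R : ℕ) (x : ℝ) : cut R x ≤ 1 := min_le_left _ _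

lemma cut_eq_one {R : ℕ} {x : ℝ} (h : |x| ≤ (R : ℝ)) : cut R x = 1 :=
  min_eq_left (le_max_of_le_right (by linarith))

lemma cut_eq_zero {R : ℕ} {x : ℝ} (h : (R : ℝ) + 1 ≤ |x|) : cut R x = 0 := by
  unfold cut
  rw [max_eq_left (by linarith), min_eq_right zero_le_one]

/-- Clamping of `ℝ` onto `[-(R+1), R+1]`. -/
def proj (R : ℕ) (x : ℝ) : Set.Icc (-((R : ℝ) + 1)) ((R : ℝ) + 1) :=
  ⟨max (-((R : ℝ) + 1)) (min ((R : ℝ) + 1) x), by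
    constructor
    · exact le_max_left _ _
    · have h0 : (0 : ℝ) ≤ (R : ℝ) := Nat.cast_nonneg R
      exact max_le (by linarith) (min_le_left _ _)⟩

lemma proj_continuous (R : ℕ) : Continuous (proj R) :=
  Continuous.subtype_mk (continuous_const.max (continuous_const.min continuous_id)) _

lemma proj_eq {R : ℕ} {x : ℝ} (h : |x| ≤ (R : ℝ) + 1) : ((proj R x) : ℝ) = x := by
  have h1 := abs_le.mp h
  show max (-((R : ℝ) + 1)) (min ((R : ℝ) + 1) x) = x
  rw [min_eq_right h1.2, max_eq_right h1.1]

/-- Extension of a continuous function on `[-(R+1), R+1]` to all of `ℝ`, with cutoff. -/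
def extFun (R : ℕ) (h : C(Set.Icc (-((R : ℝ) + 1)) ((R : ℝ) + 1), ℝ)) : ℝ → ℝ :=
  fun x => h (proj R x) * cut R x

lemma extFun_continuous (R : ℕ) (h : C(Set.Icc (-((R : ℝ) + 1)) ((R : ℝ) + 1), ℝ)) :
    Continuous (extFun R h) :=
  (h.continuous.comp (proj_continuous R)).mul (cut_continuous R)

lemma abs_apply_le_norm {R : ℕ} (h : C(Set.Icc (-((R : ℝ) + 1)) ((R : ℝ) + 1), ℝ))
    (y : Set.Icc (-((R : ℝ) + 1)) ((R : ℝ) + 1)) : |h y| ≤ ‖h‖ := by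
  rw [← Real.norm_eq_abs]
  exact h.norm_coe_le_norm y

lemma extFun_abs_le (R : ℕ) (h : C(Set.Icc (-((R : ℝ) + 1)) ((R : ℝ) + 1), ℝ)) (x : ℝ) :
    |extFun R h x| ≤ |h (proj R x)| := by
  unfold extFun
  rw [abs_mul]
  refine mul_le_of_le_one_right (abs_nonneg _) ?_
  rw [abs_of_nonneg (cut_nonneg R x)]
  exact cut_le_one R x

lemma extFun_mem (R : ℕ) (h : C(Set.Icc (-((R : ℝ) + 1)) ((R : ℝ) + 1), ℝ)) :
    extFun R h ∈ Ctem := by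
  refine ⟨extFun_continuous R h, fun lam hlam => ⟨‖h‖, fun x => ?_⟩⟩
  have hb : |extFun R h x| ≤ ‖h‖ :=
    le_trans (extFun_abs_le R h x) (abs_apply_le_norm h _)
  have hexp : Real.exp (-lam * |x|) ≤ 1 := by
    rw [Real.exp_le_one_iff]
    nlinarith [abs_nonneg x]
  calc |extFun R h x| * Real.exp (-lam * |x|) ≤ ‖h‖ * 1 :=
        mul_le_mul hb hexp (Real.exp_pos _).le (norm_nonneg _)
    _ = ‖h‖ := mul_one _

set_option synthInstance.maxHeartbeats 1000000 in
lemma exists_DD (R : ℕ) :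
    ∃ s : Set C(Set.Icc (-((R : ℝ) + 1)) ((R : ℝ) + 1), ℝ), s.Countable ∧ Dense s :=
  TopologicalSpace.exists_countable_dense _

/-- A countable dense set of `C([-(R+1), R+1], ℝ)`. -/
noncomputable def DD (R : ℕ) : Set C(Set.Icc (-((R : ℝ) + 1)) ((R : ℝ) + 1), ℝ) :=
  (exists_DD R).choose

lemma DD_countable (R : ℕ) : (DD R).Countable := (exists_DD R).choose_spec.1

lemma DD_dense (R : ℕ) : Dense (DD R) := (exists_DD R).choose_spec.2

lemma exists_close {f : ℝ → ℝ} (hf : f ∈ Ctem) {ε : ℝ} (hε : 0 < ε) :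
    ∃ (R : ℕ) (h : C(Set.Icc (-((R : ℝ) + 1)) ((R : ℝ) + 1), ℝ)),
      h ∈ DD R ∧ rhoC f (extFun R h) < ε := by
  obtain ⟨K, hK⟩ := exists_pow_lt_of_lt_one (half_pos hε) (by norm_num : (1/2:ℝ) < 1)
  set lam : ℝ := ((K : ℝ) + 1)⁻¹ with hlamdef
  have hlam : 0 < lam := by positivity
  set ε' : ℝ := ε / 4 with hε'def
  have hε' : 0 < ε' := by positivity
  obtain ⟨M, hM⟩ := hf.2 (lam / 2) (by positivity)
  have hM0 : 0 ≤ M := le_trans (by positivity) (hM 0)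
  -- choose the radius R
  have hdecay : Filter.Tendsto (fun n : ℕ => M * Real.exp (-(lam/2) * n))
      Filter.atTop (nhds 0) := by
    rw [show (0:ℝ) = M * 0 by ring]
    apply Filter.Tendsto.const_mul
    apply Real.tendsto_exp_atBot.comp
    apply Filter.Tendsto.const_mul_atTop_of_neg (by linarith : -(lam/2) < 0)
    exact tendsto_natCast_atTop_atTop
  obtain ⟨R, hR⟩ := (hdecay.eventually_lt_const (by positivity : (0:ℝ) < ε'/4)).exists
  have hRdecay : ∀ x : ℝ, (R : ℝ) ≤ |x| → |f x| * Real.exp (-lam * |x|) ≤ ε' / 4 := by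
    intro x hx
    have h1 : |f x| * Real.exp (-(lam/2) * |x|) ≤ M := hM x
    have e1 : Real.exp (-lam * |x|)
        = Real.exp (-(lam/2) * |x|) * Real.exp (-(lam/2) * |x|) := by
      rw [← Real.exp_add]
      congr 1
      ring
    have e2 : Real.exp (-(lam/2) * |x|) ≤ Real.exp (-(lam/2) * R) := by
      apply Real.exp_le_exp.mpr
      nlinarith
    calc |f x| * Real.exp (-lam * |x|)
        = (|f x| * Real.exp (-(lam/2) * |x|)) * Real.exp (-(lam/2) * |x|) := by
          rw [e1]; ring
      _ ≤ M * Real.exp (-(lam/2) * R) :=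
          mul_le_mul h1 e2 (Real.exp_pos _).le hM0
      _ ≤ ε' / 4 := hR.le
  -- pick a close element of the countable dense set
  let fI : C(Set.Icc (-((R : ℝ) + 1)) ((R : ℝ) + 1), ℝ) :=
    ⟨fun y => f y.1, hf.1.comp continuous_subtype_val⟩
  obtain ⟨h, hball, hhD⟩ := Metric.dense_iff.mp (DD_dense R) fI (ε'/4) (by positivity)
  have hclose : ∀ y : Set.Icc (-((R : ℝ) + 1)) ((R : ℝ) + 1), |f y.1 - h y| ≤ ε' / 4 := by
    intro y
    have h1 : dist (fI y) (h y) ≤ dist fI h := ContinuousMap.dist_apply_le_dist y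
    have h2 : dist fI h < ε'/4 := by
      rw [dist_comm]
      exact Metric.mem_ball.mp hball
    have h3 : dist (fI y) (h y) = |f y.1 - h y| := Real.dist_eq _ _
    linarith
  refine ⟨R, h, hhD, ?_⟩
  set g : ℝ → ℝ := extFun R h with hg
  have hpoint : ∀ x : ℝ, |f x - g x| * Real.exp (-lam * |x|) ≤ ε' := by
    intro x
    have hexp1 : Real.exp (-lam * |x|) ≤ 1 := by
      rw [Real.exp_le_one_iff]
      nlinarith [abs_nonneg x]
    rcases le_total |x| (R : ℝ) with hx | hx
    · have h1 : cut R x = 1 := cut_eq_one hx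
      have hxI : |x| ≤ (R : ℝ) + 1 := by linarith
      have h2 : ((proj R x) : ℝ) = x := proj_eq hxI
      have hval : g x = h (proj R x) := by
        rw [hg]; unfold extFun; rw [h1, mul_one]
      have h3 : |f x - g x| ≤ ε' / 4 := by
        rw [hval]
        have := hclose (proj R x)
        rwa [h2] at this
      calc |f x - g x| * Real.exp (-lam * |x|) ≤ (ε'/4) * 1 :=
            mul_le_mul h3 hexp1 (Real.exp_pos _).le (by positivity)
        _ ≤ ε' := by linarith
    · rcases le_total |x| ((R : ℝ) + 1) with hx2 | hx2
      · have h2 : ((proj R x) : ℝ) = x := proj_eq hx2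
        have hgb : |g x| ≤ |f x| + ε' / 4 := by
          refine le_trans (extFun_abs_le R h x) ?_
          have hc := hclose (proj R x)
          rw [h2] at hc
          have habs : |h (proj R x)| ≤ |f x| + |f x - h (proj R x)| := by
            have hid : h (proj R x) = f x - (f x - h (proj R x)) := by ring
            calc |h (proj R x)| = |f x - (f x - h (proj R x))| := by rw [← hid]
              _ ≤ |f x| + |f x - h (proj R x)| := abs_sub _ _
          linarith
        have hfsmall := hRdecay x hx
        have hsub : |f x - g x| ≤ |f x| + |g x| := abs_sub _ _
        calc |f x - g x| * Real.exp (-lam * |x|)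
            ≤ (|f x| + (|f x| + ε'/4)) * Real.exp (-lam * |x|) := by
              refine mul_le_mul_of_nonneg_right ?_ (Real.exp_pos _).le
              linarith
          _ = 2 * (|f x| * Real.exp (-lam * |x|)) + (ε'/4) * Real.exp (-lam * |x|) := by
              ring
          _ ≤ 2 * (ε'/4) + (ε'/4) * 1 := by
              refine add_le_add ?_ ?_
              · linarith [hfsmall]
              · exact mul_le_mul_of_nonneg_left hexp1 (by positivity)
          _ ≤ ε' := by linarith
      · have h1 : cut R x = 0 := cut_eq_zero hx2
        have hval : g x = 0 := by
          rw [hg]; unfold extFun; rw [h1, mul_zero]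
        rw [hval, sub_zero]
        exact le_trans (hRdecay x hx) (by linarith)
  have hrho : ∀ n < K + 1, rhoLam (((n : ℝ) + 1)⁻¹) f g ≤ ε' := by
    intro n hn
    apply rhoLam_le
    intro x
    have hln : lam ≤ ((n : ℝ) + 1)⁻¹ := by
      rw [hlamdef]
      have hnK : (n : ℝ) ≤ (K : ℝ) := by exact_mod_cast Nat.lt_succ_iff.mp hn
      have hpos : (0:ℝ) < (n : ℝ) + 1 := by positivity
      rw [inv_le_inv₀ (by positivity) hpos]
      linarith
    have hw : Real.exp (-((n : ℝ) + 1)⁻¹ * |x|) ≤ Real.exp (-lam * |x|) := by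
      apply Real.exp_le_exp.mpr
      nlinarith [abs_nonneg x]
    calc |f x - g x| * Real.exp (-((n : ℝ) + 1)⁻¹ * |x|)
        ≤ |f x - g x| * Real.exp (-lam * |x|) :=
          mul_le_mul_of_nonneg_left hw (abs_nonneg _)
      _ ≤ ε' := hpoint x
  have hfinal := rhoC_le_of hε'.le (K + 1) hrho
  have hpow : (1/2:ℝ) ^ (K + 1) ≤ (1/2:ℝ) ^ K :=
    pow_le_pow_of_le_one (by norm_num) (by norm_num) (Nat.le_succ K)
  calc rhoC f g ≤ ε' + (1/2:ℝ) ^ (K + 1) := hfinal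
    _ ≤ ε' + (1/2:ℝ) ^ K := by linarith
    _ < ε/4 + ε/2 := by rw [hε'def]; linarith
    _ < ε := by linarith

instance ctemSeparable : TopologicalSpace.SeparableSpace CtemT := by
  have hTc : (⋃ R : ℕ, extFun R '' DD R).Countable :=
    Set.countable_iUnion fun R => (DD_countable R).image _
  refine ⟨⟨(fun p : CtemT => p.1) ⁻¹' (⋃ R : ℕ, extFun R '' DD R),
    hTc.preimage (fun a b hab => Subtype.ext hab), ?_⟩⟩
  rw [Metric.dense_iff]
  intro p r hr
  obtain ⟨R, h, hhD, hclose⟩ := exists_close p.2 hr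
  refine ⟨⟨extFun R h, extFun_mem R h⟩, Metric.mem_ball.mpr ?_, ?_⟩
  · show rhoC (extFun R h) p.1 < r
    rw [rhoC_comm]
    exact hclose
  · show (⟨extFun R h, extFun_mem R h⟩ : CtemT).1 ∈ ⋃ R : ℕ, extFun R '' DD R
    exact Set.mem_iUnion.mpr ⟨R, Set.mem_image_of_mem _ hhD⟩

end CtemAux


/-- `(C_tem, ϱ)` is a Polish space: there is a metric space structure whose
distance is `ϱ`, which is complete and separable. -/
theorem Ctem_polish :
    ∃ m : MetricSpace {f : ℝ → ℝ // f ∈ Ctem},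
      (∀ f g : {f : ℝ → ℝ // f ∈ Ctem}, m.dist f g = rhoC f.1 g.1) ∧
      @CompleteSpace _ m.toUniformSpace ∧
      @TopologicalSpace.SeparableSpace _ m.toUniformSpace.toTopologicalSpace := by
  exact ⟨CtemAux.ctemMS, fun f g => rfl, CtemAux.ctemComplete, CtemAux.ctemSeparable⟩
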